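/- Let X be an infinite, locally finite, connected, vertex-transitive graph containing a bi-infinite geodesic (x_n)_{n∈ℤ} with d(x_m,x_n) = |m − n|, and let 0 < α ≤ 1. If f : X → X_α is an (L,A)-quasi-isometric embedding (where X carries its own shortest-path metric and X_α carries its shortest-path metric), then for every vertex v of X, the distance in X_α from f(v) to the vertex set of X is at most L³ + 2L²A + A; in particular, sup_{v∈X} d(f(v), X) < ∞. -/

import Mathlib

/-- `f` is an `(L,A)`-quasi-isometric embedding with respect to the
distance functions `dX` and `dY`. -/
def IsQIE {X Y : Type*} (dX : X → X → ℝ) (dY : Y → Y → ℝ) (L A : ℝ) (f : X → Y) : Prop :=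
  ∀ a b : X, (1 / L) * dX a b - A ≤ dY (f a) (f b) ∧ dY (f a) (f b) ≤ L * dX a b + A

/-- `f` is coarsely surjective with respect to the distance function `dY`. -/
def IsCoarselySurj {X Y : Type*} (dY : Y → Y → ℝ) (f : X → Y) : Prop :=
  ∃ C : ℝ, 0 ≤ C ∧ ∀ y : Y, ∃ x : X, dY y (f x) ≤ C

/-- The shortest-path distance of a graph, as a real-valued distance function. -/
noncomputable def gdist {V : Type*} (G : SimpleGraph V) : V → V → ℝ :=
  fun u v => (G.dist u v : ℝ)

/-- The closed ball of radius `r` about `x` in the shortest-path metric. -/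
def gball {V : Type*} (G : SimpleGraph V) (x : V) (r : ℕ) : Set V :=
  {v | G.dist x v ≤ r}

/-- `g_α(n) = ⌈(log n)^α⌉`, the length of the segment attached at `x_{n²}`. -/
noncomputable def glen (α : ℝ) (n : ℕ) : ℤ := ⌈Real.log (n : ℝ) ^ α⌉

/-- The vertex set of `X_α`: vertices of `X` together with the new segment vertices
`k_n` for `n ≥ 1` and `1 ≤ k ≤ g_α(n)`. -/
def XaV (α : ℝ) (V : Type*) : Type _ :=
  V ⊕ {p : ℕ × ℕ // 1 ≤ p.1 ∧ 1 ≤ p.2 ∧ (p.2 : ℤ) ≤ glen α p.1}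

/-- The adjacency relation of `X_α`: the adjacencies of `X`, the vertex `1_n` is
attached to `0_n = x_{n²}`, and `k_n` is adjacent to `(k+1)_n`. -/
def xaRel (α : ℝ) {V : Type*} (G : SimpleGraph V) (x : ℤ → V) :
    XaV α V → XaV α V → Prop
  | Sum.inl u, Sum.inl v => G.Adj u v
  | Sum.inl u, Sum.inr p => p.1.2 = 1 ∧ u = x ((p.1.1 : ℤ) ^ 2)
  | Sum.inr p, Sum.inl u => p.1.2 = 1 ∧ u = x ((p.1.1 : ℤ) ^ 2)
  | Sum.inr p, Sum.inr q => p.1.1 = q.1.1 ∧ (p.1.2 + 1 = q.1.2 ∨ q.1.2 + 1 = p.1.2)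

/-- The graph `X_α`, obtained from `X` by attaching, for each `n ≥ 1`, a segment of
length `g_α(n)` at the vertex `x_{n²}` of the chosen bi-infinite geodesic. -/
def Xa (α : ℝ) {V : Type*} (G : SimpleGraph V) (x : ℤ → V) : SimpleGraph (XaV α V) :=
  SimpleGraph.fromRel (xaRel α G x)


/-! The segment attached at `x_{n²}` hangs off `X` at that single vertex, so for `z` off the
segment the distance from its depth-`k` vertex to `z` is `k + d(x_{n²}, z)`. If `f(v)` is the
depth-`k` vertex, move along a geodesic through `v` in each direction until `f` first leaves
the segment, after `i` resp. `j` steps. The exit points lie within `L + A - 1` of `x_{n²}`,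
hence within `2(L + A - 1)` of each other, which bounds `i + j` by `L(2L + 3A - 2)`; on the other
hand `2k ≤ L(i + j) + 2A`. -/

theorem IsQIE.dist_le_mul {X Y : Type*} {dX : X → X → ℝ} {dY : Y → Y → ℝ} {L A : ℝ}
    {f : X → Y} (hf : IsQIE dX dY L A f) (hL : 0 < L) (a b : X) :
    dX a b ≤ L * (dY (f a) (f b) + A) := by
  have h := (hf a b).1
  rw [one_div, ← div_eq_inv_mul, sub_le_iff_le_add, div_le_iff₀ hL] at h
  linarith

theorem IsQIE.comp_isometry {V Y : Type*} {G : SimpleGraph V} {dY : Y → Y → ℝ} {L A : ℝ}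
    {f : V → Y} (hf : IsQIE (gdist G) dY L A f) {u : ℤ → V}
    (hu : ∀ a b, G.dist (u a) (u b) = (a - b).natAbs) :
    IsQIE dist dY L A (f ∘ u) := by
  intro a b
  have h := hf (u a) (u b)
  rwa [gdist, hu, Nat.cast_natAbs, Int.cast_abs, Int.cast_sub, ← Int.dist_eq] at h

namespace SimpleGraph

variable {W : Type*} {Γ : SimpleGraph W}

theorem Connected.dist_iso_apply (hΓ : Γ.Connected) (φ : Γ ≃g Γ) (a b : W) :
    Γ.dist (φ a) (φ b) = Γ.dist a b := by
  have hle : ∀ (ψ : Γ ≃g Γ) (a b : W), Γ.dist (ψ a) (ψ b) ≤ Γ.dist a b := by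
    intro ψ a b
    obtain ⟨p, hp⟩ := hΓ.exists_walk_length_eq_dist a b
    simpa [hp] using dist_le (p.map ψ.toHom)
  refine (hle φ a b).antisymm ?_
  simpa using hle φ.symm (φ a) (φ b)

theorem Walk.le_add_length {H : W → ℤ} (hH : ∀ a b, Γ.Adj a b → H a ≤ H b + 1)
    {a b : W} (p : Γ.Walk a b) : H a ≤ H b + p.length := by
  induction p with
  | nil => simp
  | cons hadj _ ih =>
    rw [Walk.length_cons]
    push_cast
    linarith [hH _ _ hadj]

theorem Reachable.le_add_dist {H : W → ℤ} (hH : ∀ a b, Γ.Adj a b → H a ≤ H b + 1)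
    {a b : W} (hr : Γ.Reachable a b) : H a ≤ H b + Γ.dist a b := by
  obtain ⟨p, hp⟩ := hr.exists_walk_length_eq_dist
  simpa [hp] using p.le_add_length hH

end SimpleGraph

structure IsPendantBranch {W : Type*} (Γ : SimpleGraph W) (S : Set W) (c : W) (h : W → ℕ) :
    Prop where
  le_add_one_of_adj : ∀ ⦃a b⦄, Γ.Adj a b → a ∈ S → b ∈ S → h a ≤ h b + 1
  eq_of_adj_of_notMem : ∀ ⦃a b⦄, Γ.Adj a b → a ∈ S → b ∉ S → b = c ∧ h a = 1
  one_le : ∀ a ∈ S, 1 ≤ h a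

namespace IsPendantBranch

variable {W : Type*} {Γ : SimpleGraph W} {S : Set W} {c : W} {h : W → ℕ}

theorem depth_add_dist_le (hB : IsPendantBranch Γ S c h) {a z : W} (hr : Γ.Reachable a z)
    (ha : a ∈ S) (hz : z ∉ S) : h a + Γ.dist c z ≤ Γ.dist a z := by
  classical
  -- the depth inside `S`, continued by `-d(c, ·)` outside; it grows by at most one per edge
  let H : W → ℤ := fun w => if w ∈ S then h w else -(Γ.dist c w)
  have hH : ∀ a b, Γ.Adj a b → H a ≤ H b + 1 := by
    intro a b hab
    by_cases ha : a ∈ S <;> by_cases hb : b ∈ S <;> simp only [H, ha, hb, if_true, if_false]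
    · exact_mod_cast hB.le_add_one_of_adj hab ha hb
    · obtain ⟨rfl, h1⟩ := hB.eq_of_adj_of_notMem hab ha hb
      simp [h1]
    · omega
    · rcases hab.diff_dist_adj (u := c) with h | h | h <;> omega
  have := hr.le_add_dist hH
  simp only [H, ha, hz, if_true, if_false] at this
  omega

variable {L A : ℝ} {D : ℕ} {y : ℤ → W}

theorem exists_notMem_of_isQIE (hΓ : Γ.Connected) (hS : ∀ w ∈ S, Γ.dist c w ≤ D)
    (hL : 0 < L) (hy : IsQIE dist (gdist Γ) L A y) : ∃ m : ℕ, y m ∉ S := by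
  by_contra! hall
  set m : ℕ := ⌈L * (2 * D + A)⌉₊ + 1
  have hdiam : gdist Γ (y 0) (y m) ≤ 2 * D := by
    have := hΓ.dist_triangle (u := y 0) (v := c) (w := y m)
    rw [SimpleGraph.dist_comm (u := y 0) (v := c)] at this
    have := hS _ (by simpa using hall 0)
    have := hS _ (hall m)
    simp only [gdist]
    norm_cast
    omega
  have hm : (m : ℝ) ≤ L * (2 * D + A) := by
    have := hy.dist_le_mul hL 0 m
    rw [Int.dist_eq, Int.cast_zero, zero_sub, abs_neg, Int.cast_natCast,
      abs_of_nonneg (Nat.cast_nonneg _)] at this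
    exact this.trans (by gcongr)
  have := Nat.le_ceil (L * (2 * D + A))
  push_cast [m] at hm
  linarith

theorem exists_exit (hB : IsPendantBranch Γ S c h) (hΓ : Γ.Connected)
    (hS : ∀ w ∈ S, Γ.dist c w ≤ D) (hL : 0 < L) (hy : IsQIE dist (gdist Γ) L A y)
    (h0 : y 0 ∈ S) :
    ∃ i : ℕ, y i ∉ S ∧ (h (y 0) + Γ.dist c (y i) : ℝ) ≤ L * i + A ∧
      (Γ.dist c (y i) : ℝ) + 1 ≤ L + A := by
  classical
  have hex := exists_notMem_of_isQIE hΓ hS hL hy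
  set i := Nat.find hex
  have hi : y i ∉ S := Nat.find_spec hex
  have hi0 : i ≠ 0 := fun hi0 => hi (by simpa [hi0] using h0)
  have hprev : y (i - 1 : ℤ) ∈ S := by
    have := not_not.1 (Nat.find_min hex (Nat.sub_one_lt hi0))
    rwa [Nat.cast_sub (Nat.one_le_iff_ne_zero.2 hi0), Nat.cast_one] at this
  refine ⟨i, hi, ?_, ?_⟩
  · have hlow : ((h (y 0) + Γ.dist c (y i) : ℕ) : ℝ) ≤ Γ.dist (y 0) (y i) := by
      exact_mod_cast hB.depth_add_dist_le (hΓ _ _) h0 hi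
    have hup := (hy 0 i).2
    rw [Int.dist_eq, Int.cast_zero, zero_sub, abs_neg, Int.cast_natCast,
      abs_of_nonneg (Nat.cast_nonneg _)] at hup
    simp only [gdist] at hup
    push_cast at hlow ⊢
    linarith
  · have hlow : ((h (y (i - 1)) + Γ.dist c (y i) : ℕ) : ℝ) ≤ Γ.dist (y (i - 1)) (y i) := by
      exact_mod_cast hB.depth_add_dist_le (hΓ _ _) hprev hi
    have hup := (hy (i - 1) i).2
    have hone : (1 : ℝ) ≤ h (y (i - 1)) := by exact_mod_cast hB.one_le _ hprev
    rw [Int.dist_eq] at hup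
    norm_num [gdist] at hup
    push_cast at hlow
    linarith

theorem depth_le_of_isQIE (hB : IsPendantBranch Γ S c h) (hΓ : Γ.Connected)
    (hS : ∀ w ∈ S, Γ.dist c w ≤ D) (hL : 0 < L) (hA : 0 ≤ A)
    (hy : IsQIE dist (gdist Γ) L A y) (h0 : y 0 ∈ S) :
    (h (y 0) : ℝ) ≤ L ^ 3 + 2 * L ^ 2 * A + A := by
  obtain ⟨i, -, hi, hic⟩ := hB.exists_exit hΓ hS hL hy h0
  have hy' : IsQIE dist (gdist Γ) L A (y ∘ Neg.neg) := fun a b => by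
    simpa only [Function.comp_apply, dist_neg_neg] using hy (-a) (-b)
  obtain ⟨j, -, hj, hjc⟩ := hB.exists_exit hΓ hS hL hy' (by simpa using h0)
  simp only [Function.comp_apply, neg_zero] at hj hjc
  set c₁ : ℝ := ((Γ.dist c (y i) : ℕ) : ℝ)
  set c₂ : ℝ := ((Γ.dist c (y (-j)) : ℕ) : ℝ)
  have hcross : (i + j : ℝ) ≤ L * (c₁ + c₂ + A) := by
    have h1 := hy.dist_le_mul hL i (-j)
    have h2 : Γ.dist (y i) (y (-j)) ≤ Γ.dist c (y i) + Γ.dist c (y (-j)) := by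
      rw [SimpleGraph.dist_comm (u := c) (v := y i)]
      exact hΓ.dist_triangle
    rw [Int.dist_eq, Int.cast_neg, sub_neg_eq_add, abs_of_nonneg (by positivity)] at h1
    simp only [gdist, Int.cast_natCast] at h1
    have h2' : (Γ.dist (y i) (y (-j)) : ℝ) ≤ c₁ + c₂ := by
      simp only [c₁, c₂]
      exact_mod_cast h2
    exact h1.trans (by gcongr)
  have hij : (i + j : ℝ) ≤ L * (2 * L + 3 * A - 2) :=
    hcross.trans (by gcongr; linarith)
  have hc : 0 ≤ c₁ + c₂ := by positivity
  nlinarith [mul_le_mul_of_nonneg_left hij hL.le, mul_nonneg (sq_nonneg L) hA]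

end IsPendantBranch

namespace Xa

variable {α : ℝ} {V : Type*} {G : SimpleGraph V} {x : ℤ → V}

theorem adj_inl {u w : V} (h : G.Adj u w) : (Xa α G x).Adj (.inl u) (.inl w) :=
  ⟨fun hc => h.ne (Sum.inl.inj hc), Or.inl h⟩

def inlHom : G →g Xa α G x where
  toFun := Sum.inl
  map_rel' := adj_inl

theorem exists_walk_to_base (n : ℕ) :
    ∀ (j : ℕ) (hj : 1 ≤ n ∧ 1 ≤ j ∧ (j : ℤ) ≤ glen α n),
      ∃ p : (Xa α G x).Walk (.inr ⟨(n, j), hj⟩) (.inl (x ((n : ℤ) ^ 2))), p.length = j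
  | 0, hj => absurd hj.2.1 (by norm_num)
  | 1, hj => ⟨SimpleGraph.Adj.toWalk ⟨Sum.inr_ne_inl, Or.inl ⟨rfl, rfl⟩⟩, rfl⟩
  | j + 2, hj => by
    have hj' : 1 ≤ n ∧ 1 ≤ j + 1 ∧ ((j + 1 : ℕ) : ℤ) ≤ glen α n :=
      ⟨hj.1, by omega, by have := hj.2.2; push_cast at this ⊢; omega⟩
    obtain ⟨p, hp⟩ := exists_walk_to_base n (j + 1) hj'
    have hadj : (Xa α G x).Adj (.inr ⟨(n, j + 2), hj⟩) (.inr ⟨(n, j + 1), hj'⟩) :=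
      ⟨fun hc => by simpa using congrArg (fun r => r.1.2) (Sum.inr.inj hc),
        Or.inl ⟨rfl, Or.inr rfl⟩⟩
    exact ⟨.cons hadj p, by show p.length + 1 = j + 2; omega⟩

theorem dist_to_base_le (n j : ℕ) (hj : 1 ≤ n ∧ 1 ≤ j ∧ (j : ℤ) ≤ glen α n) :
    (Xa α G x).dist (.inr ⟨(n, j), hj⟩) (.inl (x ((n : ℤ) ^ 2))) ≤ j := by
  obtain ⟨p, hp⟩ := exists_walk_to_base (G := G) n j hj
  exact (SimpleGraph.dist_le p).trans_eq hp

theorem connected (hG : G.Connected) : (Xa α G x).Connected := by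
  have hbase : ∀ z : XaV α V, ∃ u : V, (Xa α G x).Reachable z (.inl u) := by
    rintro (u | ⟨⟨n, j⟩, hj⟩)
    · exact ⟨u, .rfl⟩
    · obtain ⟨p, -⟩ := exists_walk_to_base (G := G) n j hj
      exact ⟨_, ⟨p⟩⟩
  have : Nonempty (XaV α V) := ⟨.inl hG.nonempty.some⟩
  refine .mk fun z z' => ?_
  obtain ⟨u, hu⟩ := hbase z
  obtain ⟨u', hu'⟩ := hbase z'
  exact hu.trans (((hG u u').map inlHom).trans hu'.symm)

def segment (α : ℝ) (V : Type*) (n : ℕ) : Set (XaV α V) :=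
  {w | ∃ p, w = .inr p ∧ p.1.1 = n}

def depth : XaV α V → ℕ
  | .inl _ => 0
  | .inr p => p.1.2

theorem isPendantBranch_segment (n : ℕ) :
    IsPendantBranch (Xa α G x) (segment α V n) (.inl (x ((n : ℤ) ^ 2))) depth where
  le_add_one_of_adj := by
    rintro _ _ ⟨-, hab⟩ ⟨p, rfl, -⟩ ⟨q, rfl, -⟩
    simp only [xaRel] at hab
    simp only [depth]
    omega
  eq_of_adj_of_notMem := by
    rintro _ (u | q) ⟨-, hab⟩ ⟨p, rfl, rfl⟩ hb
    · simp only [xaRel, or_self] at hab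
      exact ⟨by rw [hab.2], hab.1⟩
    · simp only [xaRel] at hab
      exact absurd ⟨q, rfl, by omega⟩ hb
  one_le := by
    rintro _ ⟨p, rfl, -⟩
    exact p.2.2.1

theorem dist_base_le_of_mem_segment (n : ℕ) :
    ∀ w ∈ segment α V n,
      (Xa α G x).dist (.inl (x ((n : ℤ) ^ 2))) w ≤ (glen α n).toNat := by
  rintro _ ⟨⟨⟨m, j⟩, hj⟩, rfl, rfl⟩
  have hjg : j ≤ (glen α m).toNat := by
    have : (j : ℤ) ≤ glen α m := hj.2.2
    omega
  exact SimpleGraph.dist_comm.trans_le ((dist_to_base_le m j hj).trans hjg)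

end Xa

theorem stmt11_general {V : Type*} (G : SimpleGraph V) (hconn : G.Connected)
    (htrans : ∀ u v : V, ∃ φ : G ≃g G, φ u = v)
    (x : ℤ → V) (hgeo : ∀ m n : ℤ, G.dist (x m) (x n) = (m - n).natAbs)
    (α : ℝ)
    (L A : ℝ) (hL : 1 ≤ L) (hA : 0 ≤ A)
    (f : V → XaV α V) (hf : IsQIE (gdist G) (gdist (Xa α G x)) L A f) :
    (∀ v : V, ∃ w : V,
      gdist (Xa α G x) (f v) (Sum.inl w) ≤ L ^ 3 + 2 * L ^ 2 * A + A) ∧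
    (∃ D : ℝ, ∀ v : V, ∃ w : V, gdist (Xa α G x) (f v) (Sum.inl w) ≤ D) := by
  have hL0 : 0 < L := by linarith
  have key : ∀ v : V, ∃ w : V,
      gdist (Xa α G x) (f v) (Sum.inl w) ≤ L ^ 3 + 2 * L ^ 2 * A + A := by
    intro v
    obtain ⟨φ, hφ⟩ := htrans (x 0) v
    have hy : IsQIE dist (gdist (Xa α G x)) L A (f ∘ φ ∘ x) :=
      hf.comp_isometry fun a b => by
        rw [Function.comp_apply, Function.comp_apply, hconn.dist_iso_apply, hgeo]
    rcases hfv : f v with w | ⟨⟨n, k⟩, hk⟩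
    · refine ⟨w, (Nat.cast_eq_zero.2 SimpleGraph.dist_self).trans_le ?_⟩
      nlinarith [pow_pos hL0 3, mul_nonneg (sq_nonneg L) hA]
    · have h0 : (f ∘ φ ∘ x) 0 ∈ Xa.segment α V n :=
        ⟨⟨(n, k), hk⟩, by rw [Function.comp_apply, Function.comp_apply, hφ, hfv], rfl⟩
      have hdepth := (Xa.isPendantBranch_segment n).depth_le_of_isQIE (Xa.connected hconn)
        (Xa.dist_base_le_of_mem_segment n) hL0 hA hy h0
      simp only [Function.comp_apply, hφ, hfv, Xa.depth] at hdepth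
      exact ⟨_, (Nat.cast_le.2 (Xa.dist_to_base_le n k hk)).trans hdepth⟩
  exact ⟨key, _, key⟩

/-- if `X` is moreover vertex-transitive and `f : X → X_α` is an
`(L,A)`-quasi-isometric embedding, then every `f(v)` is within distance
`L³ + 2L²A + A` of the vertex set of `X ⊆ X_α`; in particular
`sup_{v ∈ X} d(f(v), X) < ∞`. -/
theorem stmt11 {V : Type*} (G : SimpleGraph V) [Infinite V]
    (hlf : ∀ v : V, (G.neighborSet v).Finite) (hconn : G.Connected)
    (htrans : ∀ u v : V, ∃ φ : G ≃g G, φ u = v)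
    (x : ℤ → V) (hgeo : ∀ m n : ℤ, G.dist (x m) (x n) = (m - n).natAbs)
    (α : ℝ) (hα : 0 < α) (hα1 : α ≤ 1)
    (L A : ℝ) (hL : 1 ≤ L) (hA : 0 ≤ A)
    (f : V → XaV α V) (hf : IsQIE (gdist G) (gdist (Xa α G x)) L A f) :
    (∀ v : V, ∃ w : V,
      gdist (Xa α G x) (f v) (Sum.inl w) ≤ L ^ 3 + 2 * L ^ 2 * A + A) ∧
    (∃ D : ℝ, ∀ v : V, ∃ w : V, gdist (Xa α G x) (f v) (Sum.inl w) ≤ D) :=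
  stmt11_general G hconn htrans x hgeo α L A hL hA f hf
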